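/- Let u(t,·) be smooth and strictly convex on ℝ with surjective gradient, and let u*(t,y) := sup_x (xy - u(t,x)) be its spatial Legendre transform. If u satisfies ∂ₜu - (β/2)|∂ₓu - x|² + (1/2)(1 - 1/∂ₓₓu) = 0, then u* satisfies ∂ₜu* + (β/2)|∂_y u* - y|² - (1/2)(1 - ∂_{yy}u*) = 0. -/

import Mathlib

/-!
For fixed `t` and `y`, convexity makes `x ↦ x * y - u t x` maximal at `g t y`, the inverse of the
strictly increasing map `∂ₓu(t, ·)` at `y`; this `g` is continuous in each variable. The envelope
(Danskin) theorem then gives `∂ₜu* = -∂ₜu(t, g)` and `∂_y u* = g`, and differentiating the inverse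
function gives `∂_yy u* = (∂ₓₓu(t, g))⁻¹` (also where `∂ₓₓu` vanishes: there `g` is not
differentiable and both sides are `0`). Evaluating the equation for `u` at `x = g t y`, where
`∂ₓu = y` and `x = ∂_y u*`, yields the equation for `u*`.
-/

open Filter Set Topology Function Asymptotics

theorem ConvexOn.mul_sub_le_of_hasDerivAt {v : ℝ → ℝ} {x y : ℝ} (hv : ConvexOn ℝ univ v)
    (hx : HasDerivAt v y x) (z : ℝ) : z * y - v z ≤ x * y - v x := by
  rcases lt_trichotomy z x with hzx | rfl | hxz
  · have := hv.slope_le_of_hasDerivAt (mem_univ z) (mem_univ x) hzx hx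
    rw [slope_def_field, div_le_iff₀ (sub_pos.mpr hzx)] at this
    linarith
  · rfl
  · have := hv.le_slope_of_hasDerivAt (mem_univ x) (mem_univ z) hxz hx
    rw [slope_def_field, le_div_iff₀ (sub_pos.mpr hxz)] at this
    linarith

theorem deriv_eq_inv_of_local_left_inverse {𝕜 : Type*} [NontriviallyNormedField 𝕜]
    {f g : 𝕜 → 𝕜} {f' a : 𝕜} (hg : ContinuousAt g a) (hf : HasDerivAt f f' (g a))
    (hfg : ∀ᶠ y in 𝓝 a, f (g y) = y) : deriv g a = f'⁻¹ := by
  by_cases hf' : f' = 0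
  · subst hf'
    rw [inv_zero]
    exact deriv_zero_of_not_differentiableAt
      (not_differentiableAt_of_local_left_inverse_hasDerivAt_zero hf hfg)
  · exact (hf.of_local_left_inverse hg hf' hfg).deriv

theorem continuousAt_of_apply_eq_of_monotone {X : Type*} [TopologicalSpace X]
    {F : X → ℝ → ℝ} {g h : X → ℝ} {t : X} (hmono : ∀ s, Monotone (F s))
    (hstrict : StrictMono (F t)) (hF : ∀ a, ContinuousAt (F · a) t) (hh : ContinuousAt h t)
    (hg : ∀ s, F s (g s) = h s) : ContinuousAt g t := by
  rw [ContinuousAt, tendsto_order]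
  constructor
  · intro a ha
    have hlt : F t a < h t := hg t ▸ hstrict ha
    filter_upwards [(hF a).eventually_lt hh hlt] with s hs
    by_contra! hle
    linarith [hmono s hle, hg s]
  · intro a ha
    have hlt : h t < F t a := hg t ▸ hstrict ha
    filter_upwards [hh.eventually_lt (hF a) hlt] with s hs
    by_contra! hle
    linarith [hmono s hle, hg s]

section Envelope

variable {φ φ' : ℝ → ℝ → ℝ}

theorem eventually_abs_sub_sub_mul_le (hφ : ∀ s x, HasDerivAt (φ · x) (φ' s x) s) {t x₀ : ℝ}
    (hφ' : ContinuousAt (uncurry φ') (t, x₀)) {ε : ℝ} (hε : 0 < ε) :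
    ∀ᶠ p in 𝓝 (t, x₀), |φ p.1 p.2 - φ t p.2 - (p.1 - t) * φ' t x₀| ≤ ε * |p.1 - t| := by
  obtain ⟨δ, hδ, hball⟩ := Metric.continuousAt_iff.mp hφ' ε hε
  filter_upwards [Metric.ball_mem_nhds (t, x₀) hδ] with p hp
  rw [Metric.mem_ball, Prod.dist_eq, max_lt_iff] at hp
  have hbound : ∀ r ∈ Metric.ball t δ, ‖φ' r p.2 - φ' t x₀‖ ≤ ε := fun r hr =>
    (hball (x := (r, p.2)) (by rw [Prod.dist_eq]; exact max_lt hr hp.2)).le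
  have := (convex_ball t δ).norm_image_sub_le_of_norm_hasDerivWithin_le
    (f := fun r => φ r p.2 - r * φ' t x₀)
    (fun r _ => ((hφ r p.2).sub ((hasDerivAt_id r).mul_const _)).hasDerivWithinAt)
    (by simpa using hbound) (Metric.mem_ball_self hδ) hp.1
  simp only [Real.norm_eq_abs] at this
  convert this using 2
  ring

theorem hasDerivAt_iSup_of_le_apply {m : ℝ → ℝ} {t : ℝ}
    (hφ : ∀ s x, HasDerivAt (φ · x) (φ' s x) s) (hφ' : ContinuousAt (uncurry φ') (t, m t))
    (hm : ContinuousAt m t) (hmax : ∀ s x, φ s x ≤ φ s (m s)) :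
    HasDerivAt (fun s => ⨆ x, φ s x) (φ' t (m t)) t := by
  have hsup : (fun s => ⨆ x, φ s x) = fun s => φ s (m s) := funext fun s =>
    le_antisymm (ciSup_le (hmax s)) (le_ciSup ⟨_, forall_mem_range.2 (hmax s)⟩ (m s))
  rw [hsup, hasDerivAt_iff_isLittleO, isLittleO_iff]
  intro ε hε
  -- `φ s (m s) - φ t (m t)` lies between `φ s (m t) - φ t (m t)` and `φ s (m s) - φ t (m s)`.
  have hnear := eventually_abs_sub_sub_mul_le hφ hφ' hε
  filter_upwards [(continuousAt_id.prodMk hm).eventually hnear,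
    (continuousAt_id.prodMk continuousAt_const).eventually hnear] with s hmove hfix
  simp only [id, Real.norm_eq_abs, smul_eq_mul] at hmove hfix ⊢
  rw [abs_le] at hmove hfix ⊢
  constructor <;> linarith [hmax s (m t), hmax t (m s)]

end Envelope

section Partial

variable {f : ℝ → ℝ → ℝ}

theorem hasDerivAt_fderiv_uncurry_fst (hf : Differentiable ℝ (uncurry f)) (s x : ℝ) :
    HasDerivAt (f · x) (fderiv ℝ (uncurry f) (s, x) (1, 0)) s :=
  (hf (s, x)).hasFDerivAt.comp_hasDerivAt (f := fun s => (s, x)) s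
    ((hasDerivAt_id s).prodMk (hasDerivAt_const s x))

theorem hasDerivAt_fderiv_uncurry_snd (hf : Differentiable ℝ (uncurry f)) (s x : ℝ) :
    HasDerivAt (f s) (fderiv ℝ (uncurry f) (s, x) (0, 1)) x :=
  (hf (s, x)).hasFDerivAt.comp_hasDerivAt x ((hasDerivAt_const x s).prodMk (hasDerivAt_id x))

theorem ContDiff.continuous_uncurry_deriv_fst (hf : ContDiff ℝ 1 (uncurry f)) :
    Continuous (uncurry fun s x => deriv (f · x) s) := by
  have hderiv : (uncurry fun s x => deriv (f · x) s) = fun p => fderiv ℝ (uncurry f) p (1, 0) :=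
    funext fun p => (hasDerivAt_fderiv_uncurry_fst (hf.differentiable one_ne_zero) p.1 p.2).deriv
  rw [hderiv]
  exact (hf.continuous_fderiv one_ne_zero).clm_apply continuous_const

theorem ContDiff.continuous_uncurry_deriv_snd (hf : ContDiff ℝ 1 (uncurry f)) :
    Continuous (uncurry fun s x => deriv (f s) x) := by
  have hderiv : (uncurry fun s x => deriv (f s) x) = fun p => fderiv ℝ (uncurry f) p (0, 1) :=
    funext fun p => (hasDerivAt_fderiv_uncurry_snd (hf.differentiable one_ne_zero) p.1 p.2).deriv
  rw [hderiv]
  exact (hf.continuous_fderiv one_ne_zero).clm_apply continuous_const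

end Partial

theorem sbb_stmt2_general (β : ℝ) (u ustar : ℝ → ℝ → ℝ)
    (hu : ContDiff ℝ 2 (Function.uncurry u))
    (hconv : ∀ t, StrictConvexOn ℝ Set.univ (u t))
    (hbij : ∀ t, Function.Bijective (deriv (u t)))
    (hstar : ∀ t y, ustar t y = ⨆ x : ℝ, (x * y - u t x))
    (hPDE : ∀ t x, deriv (fun s => u s x) t - (β / 2) * |deriv (u t) x - x| ^ 2
      + (1 / 2) * (1 - 1 / deriv (deriv (u t)) x) = 0) :
    ∀ t y, deriv (fun s => ustar s y) t + (β / 2) * |deriv (ustar t) y - y| ^ 2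
      - (1 / 2) * (1 - deriv (deriv (ustar t)) y) = 0 := by
  have hu1 : ContDiff ℝ 1 (uncurry u) := hu.of_le one_le_two
  have hslice : ∀ t, ContDiff ℝ 2 (u t) := fun t => hu.comp (contDiff_const.prodMk contDiff_id)
  have hux : ∀ t x, HasDerivAt (u t) (deriv (u t) x) x := fun t x =>
    ((hslice t).differentiable two_ne_zero x).hasDerivAt
  have hut : ∀ s x, HasDerivAt (u · x) (deriv (u · x) s) s := fun s x =>
    (hasDerivAt_fderiv_uncurry_fst (hu1.differentiable one_ne_zero) s x).differentiableAt.hasDerivAt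
  have huxx : ∀ t x, HasDerivAt (deriv (u t)) (deriv (deriv (u t)) x) x := fun t x =>
    ((hslice t).differentiable_deriv_two x).hasDerivAt
  have hmono : ∀ t, StrictMono (deriv (u t)) := fun t =>
    strictMonoOn_univ.mp ((hconv t).strictMonoOn_deriv fun x _ => (hux t x).differentiableAt)
  set g : ℝ → ℝ → ℝ := fun t => invFun (deriv (u t))
  have hg : ∀ t y, deriv (u t) (g t y) = y := fun t => rightInverse_invFun (hbij t).2
  have hmax : ∀ t y x, x * y - u t x ≤ g t y * y - u t (g t y) := fun t y =>
    (hconv t).convexOn.mul_sub_le_of_hasDerivAt (by simpa only [hg t y] using hux t (g t y))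
  have hgy : ∀ t y, ContinuousAt (g t) y := fun t y =>
    continuousAt_of_apply_eq_of_monotone (F := fun _ => deriv (u t)) (fun _ => (hmono t).monotone)
      (hmono t) (fun _ => continuousAt_const) continuousAt_id (hg t)
  have hgt : ∀ t y, ContinuousAt (g · y) t := fun t y =>
    continuousAt_of_apply_eq_of_monotone (fun s => (hmono s).monotone) (hmono t)
      (fun _ => (hu1.continuous_uncurry_deriv_snd.comp
        (continuous_id.prodMk continuous_const)).continuousAt)
      continuousAt_const (fun s => hg s y)
  have hstar_y : ∀ t, deriv (ustar t) = g t := fun t => funext fun y => by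
    rw [show ustar t = fun y => ⨆ x : ℝ, x * y - u t x from funext (hstar t)]
    exact (hasDerivAt_iSup_of_le_apply (φ := fun y x => x * y - u t x) (φ' := fun _ x => x)
      (fun y x => by simpa using (hasDerivAt_id y).const_mul x)
      (continuous_snd.continuousAt) (hgy t y) (hmax t)).deriv
  have hstar_t : ∀ t y, HasDerivAt (ustar · y) (-deriv (u · (g t y)) t) t := fun t y => by
    rw [show (ustar · y) = fun s => ⨆ x : ℝ, x * y - u s x from funext (hstar · y)]
    exact hasDerivAt_iSup_of_le_apply (φ := fun s x => x * y - u s x)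
      (φ' := fun s x => -deriv (u · x) s) (fun s x => (hut s x).const_sub _)
      hu1.continuous_uncurry_deriv_fst.neg.continuousAt (hgt t y) (fun s => hmax s y)
  intro t y
  have hp := hPDE t (g t y)
  rw [hg t y, abs_sub_comm] at hp
  rw [(hstar_t t y).deriv, hstar_y, deriv_eq_inv_of_local_left_inverse (hgy t y) (huxx t _)
    (Eventually.of_forall (hg t))]
  simp only [one_div] at hp ⊢
  linarith

/-- If `u` solves `∂ₜu - (β/2)|∂ₓu - x|² + ½(1 - 1/∂ₓₓu) = 0` and is
smooth, strictly convex in `x` with bijective spatial derivative, then its spatial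
Legendre transform `u*` solves `∂ₜu* + (β/2)|∂_y u* - y|² - ½(1 - ∂_yy u*) = 0`. -/
theorem sbb_stmt2 (β : ℝ) (hβ : 0 < β) (u ustar : ℝ → ℝ → ℝ)
    (hu : ContDiff ℝ 2 (Function.uncurry u))
    (hconv : ∀ t, StrictConvexOn ℝ Set.univ (u t))
    (hbij : ∀ t, Function.Bijective (deriv (u t)))
    (hstar : ∀ t y, ustar t y = ⨆ x : ℝ, (x * y - u t x))
    (hPDE : ∀ t x, deriv (fun s => u s x) t - (β / 2) * |deriv (u t) x - x| ^ 2
      + (1 / 2) * (1 - 1 / deriv (deriv (u t)) x) = 0) :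
    ∀ t y, deriv (fun s => ustar s y) t + (β / 2) * |deriv (ustar t) y - y| ^ 2
      - (1 / 2) * (1 - deriv (deriv (ustar t)) y) = 0 :=
  sbb_stmt2_general β u ustar hu hconv hbij hstar hPDE
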